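/- Define R_ideal as the set of (x, y, z) ∈ ℝ^η × ℝ × ℝ^d with x ∈ D, z ∈ Δ^d, such that there exist x̃^1,…,x̃^d with x̃^k ∈ z_k·D_{|k} for each k, x = Σ_k x̃^k, and Σ_k (w^k · x̃^k + b^k z_k) ≥ y, and there also exist x̂^1,…,x̂^d with x̂^k ∈ z_k·D_{|k} for each k, x = Σ_k x̂^k, and Σ_k (w^k · x̂^k + b^k z_k) ≤ y. Then R_ideal = R_cayley. -/

import Mathlib

open scoped Pointwise

noncomputable section

/-- Dot product on `Fin n → ℝ`. -/
def dotp {n : ℕ} (w x : Fin n → ℝ) : ℝ := ∑ i, w i * x i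

/-- The affine function `f^k(x) = w^k ⬝ x + b^k`. -/
def affK {η d : ℕ} (w : Fin d → Fin η → ℝ) (b : Fin d → ℝ) (k : Fin d) (x : Fin η → ℝ) : ℝ :=
  dotp (w k) x + b k

/-- `D_{|k}`: the part of the domain where `f^k` attains the maximum. -/
def DrestrK {η d : ℕ} (D : Set (Fin η → ℝ)) (w : Fin d → Fin η → ℝ) (b : Fin d → ℝ)
    (k : Fin d) : Set (Fin η → ℝ) :=
  {x ∈ D | ∀ ℓ, affK w b ℓ x ≤ affK w b k x}

/-- `S_cayley = ∪_k {(x, f^k(x), e^k) : x ∈ D_{|k}}`. -/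
def Scayley {η d : ℕ} (D : Set (Fin η → ℝ)) (w : Fin d → Fin η → ℝ) (b : Fin d → ℝ) :
    Set ((Fin η → ℝ) × ℝ × (Fin d → ℝ)) :=
  ⋃ k, (fun x => (x, affK w b k x, Pi.single k (1 : ℝ))) '' DrestrK D w b k

/-- The Cayley embedding `R_cayley = conv(S_cayley)`. -/
def Rcayley {η d : ℕ} (D : Set (Fin η → ℝ)) (w : Fin d → Fin η → ℝ) (b : Fin d → ℝ) :
    Set ((Fin η → ℝ) × ℝ × (Fin d → ℝ)) :=
  convexHull ℝ (Scayley D w b)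

/-!
The map `(z, x̃) ↦ (∑ₖ x̃ᵏ, ∑ₖ (wᵏ ⬝ x̃ᵏ + bᵏ zᵏ), z)` is linear, and the set of pairs with
`z ∈ Δ^d` and `x̃ᵏ ∈ zᵏ • D_{|k}` is convex because every `D_{|k}` is, so its image is convex.
The image contains `S_cayley`: `(x, fᵏ(x), eᵏ)` is the image of `(eᵏ, x̃)` with `x̃ᵏ = x` and
`x̃ˡ = 0 ∈ 0 • D_{|ℓ}`, where `0 • D_{|ℓ} = {0}` only because irreducibility makes `D_{|ℓ}`
nonempty. Conversely, writing `x̃ᵏ = zᵏ uᵏ` exhibits every image point as a convex combination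
of points of `S_cayley`. Hence `R_cayley` is this image. A point of `R_ideal` lies on the
vertical segment between the image points given by `x̂` and `x̃`; an image point lies in
`R_ideal` with `x̂ = x̃`.
-/

lemma dotp_eq_dotProduct {n : ℕ} (w x : Fin n → ℝ) : dotp w x = w ⬝ᵥ x := rfl

lemma convex_setOf_forall_dotp_le {η m : ℕ} (A : Fin m → Fin η → ℝ) (c : Fin m → ℝ) :
    Convex ℝ {x : Fin η → ℝ | ∀ i, dotp (A i) x ≤ c i} := by
  rw [Set.ofPred_forall]
  exact convex_iInter fun i =>
    convex_halfSpace_le ⟨dotProduct_add (A i), fun r x => dotProduct_smul r (A i) x⟩ (c i)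

lemma smul_add_smul_mem_smul_set {E : Type*} [AddCommGroup E] [Module ℝ E] {C : Set E}
    (hC : Convex ℝ C) {a a' s s' : ℝ} (ha : 0 ≤ a) (ha' : 0 ≤ a') (hs : 0 ≤ s) (hs' : 0 ≤ s')
    {u u' : E} (hu : u ∈ s • C) (hu' : u' ∈ s' • C) :
    a • u + a' • u' ∈ (a * s + a' * s') • C := by
  rw [hC.add_smul (mul_nonneg ha hs) (mul_nonneg ha' hs'), mul_smul, mul_smul]
  exact Set.add_mem_add (Set.smul_mem_smul_set hu) (Set.smul_mem_smul_set hu')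

section Cayley

variable {η d : ℕ} {D : Set (Fin η → ℝ)} (w : Fin d → Fin η → ℝ) (b : Fin d → ℝ)

lemma convex_drestrK (hD : Convex ℝ D) (k : Fin d) : Convex ℝ (DrestrK D w b k) := by
  have hpieces : DrestrK D w b k = D ∩ {x | ∀ ℓ, dotp (w ℓ - w k) x ≤ b k - b ℓ} := by
    ext x
    simp only [DrestrK, affK, dotp_eq_dotProduct, sub_dotProduct, Set.mem_inter_iff,
      Set.mem_ofPred_eq, sub_le_sub_iff, add_comm]
  rw [hpieces]
  exact hD.inter (convex_setOf_forall_dotp_le _ _)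

lemma drestrK_nonempty_of_strict {k : Fin d}
    (h : ∃ x ∈ D, ∀ ℓ, ℓ ≠ k → affK w b ℓ x < affK w b k x) : (DrestrK D w b k).Nonempty := by
  obtain ⟨x, hxD, hx⟩ := h
  refine ⟨x, hxD, fun ℓ => ?_⟩
  rcases eq_or_ne ℓ k with rfl | hℓ
  · exact le_rfl
  · exact (hx ℓ hℓ).le

variable (D) in
def scaledPieces : Set ((Fin d → ℝ) × (Fin d → Fin η → ℝ)) :=
  {q | q.1 ∈ stdSimplex ℝ (Fin d) ∧ ∀ k, q.2 k ∈ q.1 k • DrestrK D w b k}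

def cayleyLift : (Fin d → ℝ) × (Fin d → Fin η → ℝ) →ₗ[ℝ] (Fin η → ℝ) × ℝ × (Fin d → ℝ) where
  toFun q := (∑ k, q.2 k, ∑ k, (dotp (w k) (q.2 k) + b k * q.1 k), q.1)
  map_add' q r := by
    simp only [Prod.fst_add, Prod.snd_add, Pi.add_apply, Finset.sum_add_distrib,
      dotp_eq_dotProduct, dotProduct_add, mul_add, Prod.mk_add_mk]
    congr 2
    ring
  map_smul' r q := by
    simp only [Prod.smul_fst, Prod.smul_snd, Pi.smul_apply, dotp_eq_dotProduct,
      dotProduct_smul, Finset.smul_sum, RingHom.id_apply, Prod.smul_mk, smul_eq_mul]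
    congr 2
    rw [Finset.mul_sum]
    exact Finset.sum_congr rfl fun k _ => by ring

lemma cayleyLift_apply (q : (Fin d → ℝ) × (Fin d → Fin η → ℝ)) :
    cayleyLift w b q = (∑ k, q.2 k, ∑ k, (dotp (w k) (q.2 k) + b k * q.1 k), q.1) := rfl

lemma convex_scaledPieces (hD : Convex ℝ D) : Convex ℝ (scaledPieces D w b) := by
  rintro ⟨z, xt⟩ ⟨hz, hxt⟩ ⟨z', xt'⟩ ⟨hz', hxt'⟩ a a' ha ha' haa'
  refine ⟨convex_stdSimplex ℝ (Fin d) hz hz' ha ha' haa', fun k => ?_⟩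
  exact smul_add_smul_mem_smul_set (convex_drestrK w b hD k) ha ha' (hz.1 k) (hz'.1 k)
    (hxt k) (hxt' k)

lemma sum_mem_of_mem_scaledPieces (hD : Convex ℝ D) {q : (Fin d → ℝ) × (Fin d → Fin η → ℝ)}
    (hq : q ∈ scaledPieces D w b) : ∑ k, q.2 k ∈ D := by
  obtain ⟨hz, hxt⟩ := hq
  choose u hu hzu using hxt
  rw [← Finset.sum_congr rfl fun k _ => hzu k]
  exact hD.sum_mem (fun k _ => hz.1 k) hz.2 fun k _ => (hu k).1

lemma cayleyLift_single (k : Fin d) (x : Fin η → ℝ) :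
    cayleyLift w b (Pi.single k 1, Pi.single k x) = (x, affK w b k x, Pi.single k 1) := by
  have hval : ∀ ℓ, dotp (w ℓ) ((Pi.single k x : Fin d → Fin η → ℝ) ℓ)
      + b ℓ * (Pi.single k 1 : Fin d → ℝ) ℓ = (Pi.single k (affK w b k x) : Fin d → ℝ) ℓ := by
    intro ℓ
    rcases eq_or_ne ℓ k with rfl | hℓ
    · simp [affK]
    · simp [hℓ, dotp]
  simp only [cayleyLift_apply, hval, Finset.sum_pi_single', Finset.mem_univ, if_true]

lemma single_mem_scaledPieces (hne : ∀ ℓ, (DrestrK D w b ℓ).Nonempty) {k : Fin d}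
    {x : Fin η → ℝ} (hx : x ∈ DrestrK D w b k) :
    (Pi.single k 1, Pi.single k x) ∈ scaledPieces D w b := by
  refine ⟨single_mem_stdSimplex ℝ k, fun ℓ => ?_⟩
  rcases eq_or_ne ℓ k with rfl | hℓ
  · simpa using hx
  · simp [hℓ, Set.zero_smul_set (hne ℓ)]

lemma cayleyLift_image_subset_rcayley :
    cayleyLift w b '' scaledPieces D w b ⊆ Rcayley D w b := by
  rintro _ ⟨⟨z, xt⟩, ⟨hz, hxt⟩, rfl⟩
  choose u hu hzu using hxt
  have hq : (z, xt) = ∑ k, z k • ((Pi.single k 1 : Fin d → ℝ), Pi.single k (u k)) := by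
    refine Prod.ext ?_ ?_ <;>
      simp only [Prod.fst_sum, Prod.snd_sum, Prod.smul_mk, ← Pi.single_smul, smul_eq_mul,
        mul_one, hzu, Finset.univ_sum_single]
  rw [hq, map_sum]
  simp only [map_smul, cayleyLift_single]
  exact (convex_convexHull ℝ _).sum_mem (fun k _ => hz.1 k) hz.2 fun k _ =>
    subset_convexHull ℝ _ (Set.mem_iUnion_of_mem k ⟨u k, hu k, rfl⟩)

lemma rcayley_eq_cayleyLift_image (hD : Convex ℝ D) (hne : ∀ k, (DrestrK D w b k).Nonempty) :
    Rcayley D w b = cayleyLift w b '' scaledPieces D w b := by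
  refine Set.Subset.antisymm ?_ (cayleyLift_image_subset_rcayley w b)
  refine convexHull_min ?_ ((convex_scaledPieces w b hD).linear_image (cayleyLift w b))
  rintro _ ⟨_, ⟨k, rfl⟩, x, hx, rfl⟩
  exact ⟨_, single_mem_scaledPieces w b hne hx, cayleyLift_single w b k x⟩

end Cayley

lemma Convex.mk_mem_of_mem_Icc {E F : Type*} [AddCommGroup E] [Module ℝ E] [AddCommGroup F]
    [Module ℝ F] {C : Set (E × ℝ × F)} (hC : Convex ℝ C) {x : E} {z : F} {y y₁ y₂ : ℝ}
    (hy : y ∈ Set.Icc y₁ y₂) (h₁ : (x, y₁, z) ∈ C) (h₂ : (x, y₂, z) ∈ C) : (x, y, z) ∈ C := by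
  rw [← segment_eq_Icc (hy.1.trans hy.2)] at hy
  obtain ⟨θ, μ, hθ, hμ, hθμ, rfl⟩ := hy
  convert hC h₁ h₂ hθ hμ hθμ using 1
  simp only [Prod.smul_mk, Prod.mk_add_mk, Convex.combo_self hθμ]

theorem stmt1_general {η d : ℕ}
    (w : Fin d → Fin η → ℝ) (b : Fin d → ℝ)
    (D : Set (Fin η → ℝ))
    (hDpoly : ∃ (m : ℕ) (A : Fin m → Fin η → ℝ) (c : Fin m → ℝ),
      D = {x | ∀ i, dotp (A i) x ≤ c i})
    (hirr : ∀ k, ∃ x ∈ D, ∀ ℓ, ℓ ≠ k → affK w b ℓ x < affK w b k x)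
    (Rideal : Set ((Fin η → ℝ) × ℝ × (Fin d → ℝ)))
    (hRideal : Rideal = {p | p.1 ∈ D ∧ p.2.2 ∈ stdSimplex ℝ (Fin d)
      ∧ (∃ xt : Fin d → Fin η → ℝ, (∀ k, xt k ∈ p.2.2 k • DrestrK D w b k)
          ∧ p.1 = ∑ k, xt k
          ∧ p.2.1 ≤ ∑ k, (dotp (w k) (xt k) + b k * p.2.2 k))
      ∧ (∃ xh : Fin d → Fin η → ℝ, (∀ k, xh k ∈ p.2.2 k • DrestrK D w b k)
          ∧ p.1 = ∑ k, xh k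
          ∧ ∑ k, (dotp (w k) (xh k) + b k * p.2.2 k) ≤ p.2.1)}) :
    Rideal = Rcayley D w b := by
  obtain ⟨m, A, c, rfl⟩ := hDpoly
  have hD := convex_setOf_forall_dotp_le A c
  have hne k := drestrK_nonempty_of_strict w b (hirr k)
  rw [rcayley_eq_cayleyLift_image w b hD hne, hRideal]
  ext ⟨x, y, z⟩
  constructor
  · rintro ⟨-, hz, ⟨xt, hxt, hx_xt, hy_le⟩, ⟨xh, hxh, hx_xh, hle_y⟩⟩
    exact ((convex_scaledPieces w b hD).linear_image (cayleyLift w b)).mk_mem_of_mem_Icc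
      ⟨hle_y, hy_le⟩ ⟨(z, xh), ⟨hz, hxh⟩, Prod.ext hx_xh.symm rfl⟩
      ⟨(z, xt), ⟨hz, hxt⟩, Prod.ext hx_xt.symm rfl⟩
  · rintro ⟨⟨z, xt⟩, hq, hxyz⟩
    obtain ⟨rfl, rfl, rfl⟩ := Prod.ext_iff.mp hxyz
    exact ⟨sum_mem_of_mem_scaledPieces w b hD hq, hq.1, ⟨xt, hq.2, rfl, le_rfl⟩,
      ⟨xt, hq.2, rfl, le_rfl⟩⟩

theorem stmt1 {η d : ℕ} (hη : 1 ≤ η) (hd : 1 ≤ d)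
    (w : Fin d → Fin η → ℝ) (b : Fin d → ℝ)
    (D : Set (Fin η → ℝ))
    (hDpoly : ∃ (m : ℕ) (A : Fin m → Fin η → ℝ) (c : Fin m → ℝ),
      D = {x | ∀ i, dotp (A i) x ≤ c i})
    (hDne : D.Nonempty) (hDbd : Bornology.IsBounded D)
    (hirr : ∀ k, ∃ x ∈ D, ∀ ℓ, ℓ ≠ k → affK w b ℓ x < affK w b k x)
    (Rideal : Set ((Fin η → ℝ) × ℝ × (Fin d → ℝ)))
    (hRideal : Rideal = {p | p.1 ∈ D ∧ p.2.2 ∈ stdSimplex ℝ (Fin d)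
      ∧ (∃ xt : Fin d → Fin η → ℝ, (∀ k, xt k ∈ p.2.2 k • DrestrK D w b k)
          ∧ p.1 = ∑ k, xt k
          ∧ p.2.1 ≤ ∑ k, (dotp (w k) (xt k) + b k * p.2.2 k))
      ∧ (∃ xh : Fin d → Fin η → ℝ, (∀ k, xh k ∈ p.2.2 k • DrestrK D w b k)
          ∧ p.1 = ∑ k, xh k
          ∧ ∑ k, (dotp (w k) (xh k) + b k * p.2.2 k) ≤ p.2.1)}) :
    Rideal = Rcayley D w b :=
  stmt1_general w b D hDpoly hirr Rideal hRideal
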